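/- Let n and g be positive integers, and let s, i, j be integers such that s ≡ g (mod n), -g + 1 ≤ s ≤ g, -g ≤ j - i ≤ g, and max(i, j - s) = 0. Then, as rational numbers, max(i - 1, j - s) + (2s + n - 1)/(2n) ≤ (2g + n - 1)/(2n), and equality holds if and only if s = g, i = 0, and j = g. -/
import Mathlib


/-- Arithmetic content of Lemma 4.1: for positive integers `n`, `g` and integers
`s`, `i`, `j` with `s ≡ g (mod n)`, `-g+1 ≤ s ≤ g`, `-g ≤ j - i ≤ g`, and
`max(i, j - s) = 0`, one has
`max(i-1, j-s) + (2s+n-1)/(2n) ≤ (2g+n-1)/(2n)` in `ℚ`, with equality iff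
`s = g`, `i = 0`, `j = g`. -/
theorem dual_knot_top_grading (n g s i j : ℤ) (hn : 0 < n) (hg : 0 < g)
    (hmod : s ≡ g [ZMOD n]) (hs1 : -g + 1 ≤ s) (hs2 : s ≤ g)
    (hij1 : -g ≤ j - i) (hij2 : j - i ≤ g)
    (hmax : max i (j - s) = 0) :
    ((max (i - 1) (j - s) : ℤ) : ℚ) + (2 * s + n - 1) / (2 * n)
        ≤ (2 * g + n - 1) / (2 * n) ∧
    (((max (i - 1) (j - s) : ℤ) : ℚ) + (2 * s + n - 1) / (2 * n)
        = (2 * g + n - 1) / (2 * n) ↔ s = g ∧ i = 0 ∧ j = g) := by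
  have hM : max (i - 1) (j - s) ≤ 0 := by omega
  have hnM : n * max (i - 1) (j - s) ≤ 0 :=
    mul_nonpos_of_nonneg_of_nonpos hn.le hM
  have h2n : (0 : ℚ) < 2 * (n : ℚ) := by
    have : (0 : ℚ) < (n : ℚ) := by exact_mod_cast hn
    linarith
  have hne : (2 * (n : ℚ)) ≠ 0 := ne_of_gt h2n
  have e1 : ((max (i - 1) (j - s) : ℤ) : ℚ) + (2 * s + n - 1) / (2 * n)
      = ((n * max (i - 1) (j - s) * 2 + (2 * s + n - 1) : ℤ) : ℚ) / (2 * n) := by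
    push_cast
    field_simp
  have e2 : ((2 * (g : ℚ) + n - 1)) / (2 * n)
      = ((2 * g + n - 1 : ℤ) : ℚ) / (2 * n) := by push_cast; ring
  rw [e1, e2]
  constructor
  · rw [div_le_div_iff_of_pos_right h2n, Int.cast_le]
    linarith
  · rw [div_left_inj' hne, Int.cast_inj]
    constructor
    · intro h
      have hsg : n * max (i - 1) (j - s) = g - s := by linarith
      have h0 : n * max (i - 1) (j - s) = 0 := by omega
      have hM0 : max (i - 1) (j - s) = 0 := by
        rcases mul_eq_zero.mp h0 with h' | h'
        · omega
        · exact h'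
      omega
    · rintro ⟨h1, h2, h3⟩
      have hM0 : max (i - 1) (j - s) = 0 := by omega
      rw [hM0]
      omega
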